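/- arXiv:1406.1868 — 2 statements merged into one kernel-verified Lean document; each statement's English description precedes it below -/
import Mathlib

section
/- Let 0 < γ < 1 and g_k^γ = (-1)^k binomial(γ, k). Then for every n ≥ 1, the partial sum ∑_{k=0}^{n-1} g_k^γ is strictly positive. -/
/-- Generalized binomial coefficient `binomial(x, k) = x(x-1)⋯(x-k+1)/k!`. -/
noncomputable def genBinom (x : ℝ) (k : ℕ) : ℝ :=
  (∏ i ∈ Finset.range k, (x - i)) / (Nat.factorial k)

/-- Grünwald coefficients `g_k^γ = (-1)^k binomial(γ, k)`. -/
noncomputable def g (x : ℝ) (k : ℕ) : ℝ := (-1 : ℝ) ^ k * genBinom x k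

lemma genBinom_pascal (x : ℝ) (m : ℕ) :
    genBinom x (m+1) = genBinom (x-1) (m+1) + genBinom (x-1) m := by
  unfold genBinom
  have h1 : ∏ i ∈ Finset.range (m+1), (x - i)
      = x * ∏ i ∈ Finset.range m, (x - 1 - i) := by
    rw [Finset.prod_range_succ', Nat.cast_zero, sub_zero, mul_comm]
    congr 1
    exact Finset.prod_congr rfl fun i _ => by push_cast; ring
  have h2 : ∏ i ∈ Finset.range (m+1), (x - 1 - i)
      = (∏ i ∈ Finset.range m, (x - 1 - i)) * (x - 1 - m) := Finset.prod_range_succ _ _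
  rw [h1, h2, Nat.factorial_succ]
  have hm : (Nat.factorial m : ℝ) ≠ 0 := Nat.cast_ne_zero.mpr (Nat.factorial_ne_zero m)
  have hm1 : ((m:ℝ) + 1) ≠ 0 := by positivity
  push_cast
  field_simp
  ring

lemma sum_g_eq (γ : ℝ) (n : ℕ) :
    ∑ k ∈ Finset.range (n+1), g γ k = (-1:ℝ)^n * genBinom (γ-1) n := by
  induction n with
  | zero => simp [g, genBinom]
  | succ m ih =>
      rw [Finset.sum_range_succ, ih, g, genBinom_pascal]
      ring

theorem stmt3 (γ : ℝ) (hγ1 : 0 < γ) (hγ2 : γ < 1) :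
    ∀ n : ℕ, 1 ≤ n → 0 < ∑ k ∈ Finset.range n, g γ k := by
  intro n hn
  obtain ⟨m, rfl⟩ := Nat.exists_eq_add_of_le hn
  rw [add_comm, sum_g_eq]
  have : (-1:ℝ)^m * genBinom (γ-1) m
      = (∏ i ∈ Finset.range m, ((i:ℝ) + 1 - γ)) / (Nat.factorial m) := by
    unfold genBinom
    rw [← mul_div_assoc]
    congr 1
    rw [← Finset.card_range m, ← Finset.prod_const (-1:ℝ)]
    simp only [Finset.card_range]
    rw [← Finset.prod_mul_distrib]
    exact Finset.prod_congr rfl fun i _ => by ring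
  rw [this]
  apply div_pos
  · exact Finset.prod_pos fun i _ => by
      have : (0:ℝ) ≤ i := Nat.cast_nonneg i
      linarith
  · exact_mod_cast Nat.factorial_pos m
end

section
/- Let 0 < γ < 1 and g_k^γ = (-1)^k binomial(γ, k). Then for every n ≥ 1, 1/(n^γ Γ(1-γ)) < ∑_{k=0}^{n-1} g_k^γ ≤ 1/n^γ. -/
noncomputable def Pfun (γ : ℝ) (n : ℕ) : ℝ :=
  ∏ i ∈ Finset.range n, (1 - γ / (i + 1))

lemma Pfun_zero (γ : ℝ) : Pfun γ 0 = 1 := by simp [Pfun]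

lemma Pfun_succ (γ : ℝ) (n : ℕ) :
    Pfun γ (n + 1) = Pfun γ n * (1 - γ / ((n : ℝ) + 1)) := by
  simp [Pfun, Finset.prod_range_succ]

lemma genBinom_zero (x : ℝ) : genBinom x 0 = 1 := by simp [genBinom]

lemma genBinom_succ (x : ℝ) (k : ℕ) :
    genBinom x (k + 1) = genBinom x k * ((x - k) / (k + 1)) := by
  rw [genBinom, genBinom, Finset.prod_range_succ, Nat.factorial_succ, div_mul_div_comm]
  congr 1
  push_cast
  ring

lemma g_zero (γ : ℝ) : g γ 0 = 1 := by simp [g, genBinom_zero]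

lemma g_succ (γ : ℝ) (k : ℕ) :
    g γ (k + 1) = g γ k * (((k : ℝ) - γ) / (k + 1)) := by
  rw [g, g, genBinom_succ, pow_succ]
  ring

lemma g_eq_Pfun (γ : ℝ) : ∀ n : ℕ, g γ (n + 1) = Pfun γ n * (-(γ / (n + 1))) := by
  intro n
  induction n with
  | zero => simp [g_succ, g_zero, Pfun_zero]
  | succ n ih =>
      rw [g_succ, ih, Pfun_succ]
      have h1 : ((n : ℝ) + 1) ≠ 0 := by positivity
      have h2 : ((n : ℝ) + 1 + 1) ≠ 0 := by positivity
      push_cast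
      field_simp

lemma sum_g_eq_Pfun (γ : ℝ) : ∀ n : ℕ,
    ∑ k ∈ Finset.range (n + 1), g γ k = Pfun γ n := by
  intro n
  induction n with
  | zero => simp [g_zero, Pfun_zero]
  | succ n ih =>
      rw [Finset.sum_range_succ, ih, g_eq_Pfun, Pfun_succ]
      ring

lemma Pfun_gamma {γ : ℝ} (hγ1 : 0 < γ) (hγ2 : γ < 1) : ∀ n : ℕ,
    Pfun γ n = Real.Gamma ((n : ℝ) + 1 - γ) /
      (Real.Gamma ((n : ℝ) + 1) * Real.Gamma (1 - γ)) := by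
  have hΓg : (0:ℝ) < Real.Gamma (1 - γ) := Real.Gamma_pos_of_pos (by linarith)
  intro n
  induction n with
  | zero =>
      simp [Pfun_zero, Real.Gamma_one]
      rw [div_self (ne_of_gt hΓg)]
  | succ n ih =>
      have hn0 : (0:ℝ) ≤ (n:ℝ) := Nat.cast_nonneg n
      have hpos : (0 : ℝ) < (n : ℝ) + 1 - γ := by linarith
      have h1 : Real.Gamma ((n : ℝ) + 1 + 1 - γ) =
          ((n : ℝ) + 1 - γ) * Real.Gamma ((n : ℝ) + 1 - γ) := by
        have := Real.Gamma_add_one (s := (n : ℝ) + 1 - γ) (ne_of_gt hpos)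
        rw [← this]; ring_nf
      have h2 : Real.Gamma ((n : ℝ) + 1 + 1) = ((n : ℝ) + 1) * Real.Gamma ((n : ℝ) + 1) := by
        have := Real.Gamma_add_one (s := (n : ℝ) + 1) (by positivity)
        rw [← this]
      have hΓn : (0:ℝ) < Real.Gamma ((n : ℝ) + 1) := Real.Gamma_pos_of_pos (by positivity)
      rw [Pfun_succ, ih]
      push_cast
      rw [h1, h2]
      field_simp

/-- Bernoulli-based induction: `Pfun γ n ≤ (n+1) ^ (-γ)`. -/
lemma Pfun_le {γ : ℝ} (hγ1 : 0 < γ) (hγ2 : γ < 1) : ∀ n : ℕ,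
    Pfun γ n ≤ ((n : ℝ) + 1) ^ (-γ) := by
  intro n
  induction n with
  | zero => simp [Pfun_zero]
  | succ n ih =>
      have hn1 : (0:ℝ) < (n : ℝ) + 1 := by positivity
      set s : ℝ := 1 / ((n : ℝ) + 1) with hs
      have hs0 : 0 < s := by positivity
      have hs1 : s ≤ 1 := by
        rw [hs, div_le_one hn1]
        linarith [Nat.cast_nonneg (α := ℝ) n]
      have hγs : γ / ((n : ℝ) + 1) = γ * s := by rw [hs]; ring
      have hbern : (1 + s) ^ γ ≤ 1 + γ * s :=
        rpow_one_add_le_one_add_mul_self (by linarith) hγ1.le hγ2.le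
      have hγs1 : γ * s ≤ γ := by nlinarith
      have hpow : (0:ℝ) < (1 + s) ^ γ := Real.rpow_pos_of_pos (by linarith) γ
      have hkey : (1 - γ * s) ≤ (1 + s) ^ (-γ) := by
        rw [Real.rpow_neg (by linarith : (0:ℝ) ≤ 1 + s), ← one_div,
          le_div_iff₀ hpow]
        nlinarith [sq_nonneg (γ * s)]
      have h12 : ((n : ℝ) + 1 + 1) = ((n : ℝ) + 1) * (1 + s) := by
        rw [hs]; field_simp
      calc Pfun γ (n + 1) = Pfun γ n * (1 - γ * s) := by rw [Pfun_succ, hγs]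
        _ ≤ ((n : ℝ) + 1) ^ (-γ) * (1 - γ * s) := by
            apply mul_le_mul_of_nonneg_right ih (by linarith)
        _ ≤ ((n : ℝ) + 1) ^ (-γ) * (1 + s) ^ (-γ) := by
            apply mul_le_mul_of_nonneg_left hkey (Real.rpow_nonneg hn1.le _)
        _ = ((n : ℝ) + 1 + 1) ^ (-γ) := by
            rw [h12, Real.mul_rpow hn1.le (by linarith)]
        _ = (((n + 1 : ℕ) : ℝ) + 1) ^ (-γ) := by push_cast; ring_nf

/-- Gautschi-type inequality via log-convexity of Γ: for `x ≥ 1`, `Γ x < x ^ γ * Γ (x - γ)`. -/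
lemma gamma_lt {γ : ℝ} (hγ1 : 0 < γ) (hγ2 : γ < 1) {x : ℝ} (hx : 1 ≤ x) :
    Real.Gamma x < x ^ γ * Real.Gamma (x - γ) := by
  have hxγ : 0 < x - γ := by linarith
  have hxγ1 : 0 < x - γ + 1 := by linarith
  have hΓ1 : 0 < Real.Gamma (x - γ) := Real.Gamma_pos_of_pos hxγ
  have hΓx : 0 < Real.Gamma x := Real.Gamma_pos_of_pos (by linarith)
  have hconv := Real.convexOn_log_Gamma
  have hmem1 : x - γ ∈ Set.Ioi (0:ℝ) := hxγ
  have hmem2 : x - γ + 1 ∈ Set.Ioi (0:ℝ) := hxγ1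
  have h := hconv.2 hmem1 hmem2 (by linarith : (0:ℝ) ≤ 1 - γ) hγ1.le (by ring)
  have hcomb : (1 - γ) • (x - γ) + γ • (x - γ + 1) = x := by
    simp only [smul_eq_mul]; ring
  rw [hcomb] at h
  simp only [Function.comp_apply, smul_eq_mul] at h
  have hgadd : Real.Gamma (x - γ + 1) = (x - γ) * Real.Gamma (x - γ) :=
    Real.Gamma_add_one (ne_of_gt hxγ)
  have hlog : Real.log (Real.Gamma x) ≤ Real.log (Real.Gamma (x - γ)) + γ * Real.log (x - γ) := by
    rw [hgadd, Real.log_mul (ne_of_gt hxγ) (ne_of_gt hΓ1)] at h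
    nlinarith
  have h1 : Real.Gamma x ≤ (x - γ) ^ γ * Real.Gamma (x - γ) := by
    have hh := Real.exp_le_exp.mpr hlog
    rw [Real.exp_log hΓx, Real.exp_add, Real.exp_log hΓ1] at hh
    rw [Real.rpow_def_of_pos hxγ]
    rw [mul_comm γ] at hh
    linarith
  have h2 : (x - γ) ^ γ * Real.Gamma (x - γ) < x ^ γ * Real.Gamma (x - γ) := by
    apply mul_lt_mul_of_pos_right _ hΓ1
    exact Real.rpow_lt_rpow hxγ.le (by linarith) hγ1
  linarith

theorem stmt5 (γ : ℝ) (hγ1 : 0 < γ) (hγ2 : γ < 1) :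
    ∀ n : ℕ, 1 ≤ n →
      1 / ((n : ℝ) ^ γ * Real.Gamma (1 - γ)) < ∑ k ∈ Finset.range n, g γ k ∧
      ∑ k ∈ Finset.range n, g γ k ≤ 1 / (n : ℝ) ^ γ := by
  intro n hn
  obtain ⟨m, rfl⟩ := Nat.exists_eq_add_of_le hn
  have hm1 : (0:ℝ) < (m : ℝ) + 1 := by positivity
  have hΓγ : 0 < Real.Gamma (1 - γ) := Real.Gamma_pos_of_pos (by linarith)
  have hcast : ((1 + m : ℕ) : ℝ) = (m : ℝ) + 1 := by push_cast; ring
  have hsum : ∑ k ∈ Finset.range (1 + m), g γ k = Pfun γ m := by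
    rw [add_comm 1 m]; exact sum_g_eq_Pfun γ m
  rw [hsum, hcast]
  have hrpow : (0:ℝ) < ((m : ℝ) + 1) ^ γ := Real.rpow_pos_of_pos hm1 γ
  constructor
  · rw [Pfun_gamma hγ1 hγ2]
    have hΓm1 : 0 < Real.Gamma ((m : ℝ) + 1) := Real.Gamma_pos_of_pos hm1
    have hΓmγ : 0 < Real.Gamma ((m : ℝ) + 1 - γ) := Real.Gamma_pos_of_pos (by linarith)
    rw [div_lt_div_iff₀ (by positivity) (by positivity)]
    have := gamma_lt hγ1 hγ2 (x := (m : ℝ) + 1) (by linarith [Nat.cast_nonneg (α := ℝ) m])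
    nlinarith
  · have h := Pfun_le hγ1 hγ2 m
    rw [Real.rpow_neg hm1.le, ← one_div] at h
    exact h
end
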